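/- Fix channels h_1, …, h_K ∈ ℂ^M, parameters m_t, m_r ∈ (0,1), noise powers σ_1², …, σ_K² > 0, a power budget P_max > 0, and set δ_SIC = 1. Let U : ℝ^K → ℝ be strictly increasing in each coordinate (i.e., if x ≤ y componentwise with x_k < y_k for some k, then U(x) < U(y)). If (w_c⋆, w_1⋆, …, w_K⋆) maximizes U(γ_{p,1}, …, γ_{p,K}) over the feasible set F = {(w_c, w_1, …, w_K) : ‖w_c‖² + Σ_{k=1}^K ‖w_k‖² ≤ P_max}, then for every user k, either h_kᴴ w_c⋆ = 0 or h_kᴴ w_k⋆ = 0. Consequently, if moreover h_kᴴ w_k⋆ ≠ 0 for all k and the intersection of the nullspaces of the linear functionals w ↦ h_kᴴ w (k = 1, …, K) is {0}, then w_c⋆ = 0. -/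

import Mathlib

/-! Switching the common stream off lowers the matrix `A` by the positive semidefinite `w_c w_cᴴ`,
so `Φ_{c,k}` does not grow, and it removes the interference term `|h_kᴴ w_c|²`. Hence no private
SINR decreases, and that of a user with `h_kᴴ w_c ≠ 0 ≠ h_kᴴ w_k` strictly increases, which a
strictly increasing utility turns into a contradiction with optimality. -/

open Matrix Finset

noncomputable section

/-- Outer product `w wᴴ`. -/
def outerProd {M : ℕ} (w : Fin M → ℂ) : Matrix (Fin M) (Fin M) ℂ :=
  Matrix.vecMulVec w (star w)

/-- `diag~(A)`: the diagonal matrix with the same diagonal as `A`. -/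
def diagTilde {M : ℕ} (A : Matrix (Fin M) (Fin M) ℂ) : Matrix (Fin M) (Fin M) ℂ :=
  Matrix.diagonal (fun i => A i i)

/-- `Φ = hᴴ [m_r A + m_t(1+m_r) diag~(A)] h + (1+m_r) σ²` (real part). -/
def Phi {M : ℕ} (mr mt σ2 : ℝ) (h : Fin M → ℂ) (A : Matrix (Fin M) (Fin M) ℂ) : ℝ :=
  (star h ⬝ᵥ (((mr : ℂ) • A + ((mt * (1 + mr) : ℝ) : ℂ) • diagTilde A)).mulVec h).re
    + (1 + mr) * σ2

/-- `A = w_c w_cᴴ + ∑ₖ w_k w_kᴴ`. -/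
def Amat {M K : ℕ} (wc : Fin M → ℂ) (w : Fin K → Fin M → ℂ) : Matrix (Fin M) (Fin M) ℂ :=
  outerProd wc + ∑ k, outerProd (w k)

/-- Private-stream SINR of user `k` under SIC imperfection coefficient `δ`. -/
def sinr {M K : ℕ} (mr mt : ℝ) (σ2 : Fin K → ℝ) (h : Fin K → Fin M → ℂ) (δ : ℝ)
    (wc : Fin M → ℂ) (w : Fin K → Fin M → ℂ) (k : Fin K) : ℝ :=
  ‖star (h k) ⬝ᵥ w k‖ ^ 2 /
    ((∑ i ∈ Finset.univ.erase k, ‖star (h k) ⬝ᵥ w i‖ ^ 2)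
      + δ ^ 2 * ‖star (h k) ⬝ᵥ wc‖ ^ 2 + Phi mr mt (σ2 k) (h k) (Amat wc w))

/-- Power of a beamformer `‖w‖²`. -/
def pw {M : ℕ} (w : Fin M → ℂ) : ℝ := ∑ j, ‖w j‖ ^ 2

open scoped ComplexOrder

lemma posSemidef_outerProd {M : ℕ} (w : Fin M → ℂ) : (outerProd w).PosSemidef :=
  posSemidef_vecMulVec_self_star w

lemma outerProd_zero {M : ℕ} : outerProd (0 : Fin M → ℂ) = 0 := by
  simp [outerProd]

lemma posSemidef_Amat {M K : ℕ} (wc : Fin M → ℂ) (w : Fin K → Fin M → ℂ) :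
    (Amat wc w).PosSemidef :=
  (posSemidef_outerProd wc).add (posSemidef_sum _ fun k _ => posSemidef_outerProd (w k))

lemma Amat_eq_Amat_zero_add {M K : ℕ} (wc : Fin M → ℂ) (w : Fin K → Fin M → ℂ) :
    Amat wc w = Amat 0 w + outerProd wc := by
  simp only [Amat, outerProd_zero, zero_add, add_comm]

lemma diagTilde_add {M : ℕ} (A B : Matrix (Fin M) (Fin M) ℂ) :
    diagTilde (A + B) = diagTilde A + diagTilde B := by
  simp [diagTilde, ← diagonal_add]

lemma Matrix.PosSemidef.diagTilde {M : ℕ} {A : Matrix (Fin M) (Fin M) ℂ} (hA : A.PosSemidef) :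
    (diagTilde A).PosSemidef :=
  .diagonal fun _ => hA.diag_nonneg

lemma re_quadForm_smul_add_smul_diagTilde_nonneg {M : ℕ} {s t : ℝ} (hs : 0 ≤ s) (ht : 0 ≤ t)
    {A : Matrix (Fin M) (Fin M) ℂ} (hA : A.PosSemidef) (h : Fin M → ℂ) :
    0 ≤ (star h ⬝ᵥ ((s : ℂ) • A + (t : ℂ) • diagTilde A) *ᵥ h).re := by
  have hB : ((s : ℂ) • A + (t : ℂ) • diagTilde A).PosSemidef :=
    (hA.smul (Complex.zero_le_real.2 hs)).add (hA.diagTilde.smul (Complex.zero_le_real.2 ht))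
  exact (Complex.nonneg_iff.1 (hB.dotProduct_mulVec_nonneg h)).1

lemma Phi_add {M : ℕ} (mr mt σ2 : ℝ) (h : Fin M → ℂ) (A B : Matrix (Fin M) (Fin M) ℂ) :
    Phi mr mt σ2 h (A + B) = Phi mr mt σ2 h A
      + (star h ⬝ᵥ ((mr : ℂ) • B + ((mt * (1 + mr) : ℝ) : ℂ) • diagTilde B) *ᵥ h).re := by
  simp only [Phi, diagTilde_add, smul_add, add_mulVec, dotProduct_add, Complex.add_re]
  ring

section

variable {M : ℕ} {mr mt : ℝ} (σ2 : ℝ) (h : Fin M → ℂ)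

lemma Phi_pos (hmr : 0 ≤ mr) (hmt : 0 ≤ mt) (hσ : 0 < σ2) {A : Matrix (Fin M) (Fin M) ℂ}
    (hA : A.PosSemidef) : 0 < Phi mr mt σ2 h A :=
  add_pos_of_nonneg_of_pos
    (re_quadForm_smul_add_smul_diagTilde_nonneg hmr (by positivity) hA h) (by positivity)

lemma Phi_le_Phi_add (hmr : 0 ≤ mr) (hmt : 0 ≤ mt) (A : Matrix (Fin M) (Fin M) ℂ)
    {B : Matrix (Fin M) (Fin M) ℂ} (hB : B.PosSemidef) :
    Phi mr mt σ2 h A ≤ Phi mr mt σ2 h (A + B) := by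
  rw [Phi_add]
  exact le_add_of_nonneg_right
    (re_quadForm_smul_add_smul_diagTilde_nonneg hmr (by positivity) hB h)

end

def interferencePlusNoise {M K : ℕ} (mr mt : ℝ) (σ2 : Fin K → ℝ) (h : Fin K → Fin M → ℂ) (δ : ℝ)
    (wc : Fin M → ℂ) (w : Fin K → Fin M → ℂ) (k : Fin K) : ℝ :=
  (∑ i ∈ Finset.univ.erase k, ‖star (h k) ⬝ᵥ w i‖ ^ 2)
    + δ ^ 2 * ‖star (h k) ⬝ᵥ wc‖ ^ 2 + Phi mr mt (σ2 k) (h k) (Amat wc w)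

section

variable {M K : ℕ} {mr mt : ℝ} (σ2 : Fin K → ℝ) (h : Fin K → Fin M → ℂ) (δ : ℝ)
  (wc : Fin M → ℂ) (w : Fin K → Fin M → ℂ) (k : Fin K)

lemma sinr_eq_div : sinr mr mt σ2 h δ wc w k
    = ‖star (h k) ⬝ᵥ w k‖ ^ 2 / interferencePlusNoise mr mt σ2 h δ wc w k :=
  rfl

lemma interferencePlusNoise_pos (hmr : 0 ≤ mr) (hmt : 0 ≤ mt) (hσ : 0 < σ2 k) :
    0 < interferencePlusNoise mr mt σ2 h δ wc w k := by
  have hΦ := Phi_pos (σ2 k) (h k) hmr hmt hσ (posSemidef_Amat wc w)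
  unfold interferencePlusNoise
  positivity

lemma interferencePlusNoise_zero_add_le (hmr : 0 ≤ mr) (hmt : 0 ≤ mt) :
    interferencePlusNoise mr mt σ2 h δ 0 w k + δ ^ 2 * ‖star (h k) ⬝ᵥ wc‖ ^ 2
      ≤ interferencePlusNoise mr mt σ2 h δ wc w k := by
  have hΦ := Phi_le_Phi_add (σ2 k) (h k) hmr hmt (Amat 0 w) (posSemidef_outerProd wc)
  rw [← Amat_eq_Amat_zero_add] at hΦ
  simp only [interferencePlusNoise, dotProduct_zero, norm_zero]
  linarith

lemma sinr_le_sinr_zero (hmr : 0 ≤ mr) (hmt : 0 ≤ mt) (hσ : 0 < σ2 k) :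
    sinr mr mt σ2 h δ wc w k ≤ sinr mr mt σ2 h δ 0 w k := by
  rw [sinr_eq_div, sinr_eq_div]
  refine div_le_div_of_nonneg_left (by positivity)
    (interferencePlusNoise_pos σ2 h δ 0 w k hmr hmt hσ) ?_
  linarith [interferencePlusNoise_zero_add_le σ2 h δ wc w k hmr hmt,
    mul_nonneg (sq_nonneg δ) (sq_nonneg ‖star (h k) ⬝ᵥ wc‖)]

lemma sinr_lt_sinr_zero (hmr : 0 ≤ mr) (hmt : 0 ≤ mt) (hσ : 0 < σ2 k) (hδ : δ ≠ 0)
    (hc : star (h k) ⬝ᵥ wc ≠ 0) (hp : star (h k) ⬝ᵥ w k ≠ 0) :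
    sinr mr mt σ2 h δ wc w k < sinr mr mt σ2 h δ 0 w k := by
  rw [sinr_eq_div, sinr_eq_div]
  refine div_lt_div_of_pos_left (by positivity)
    (interferencePlusNoise_pos σ2 h δ 0 w k hmr hmt hσ) ?_
  have : 0 < δ ^ 2 * ‖star (h k) ⬝ᵥ wc‖ ^ 2 := by positivity
  linarith [interferencePlusNoise_zero_add_le σ2 h δ wc w k hmr hmt]

end

theorem stmt3_general {M K : ℕ} (h : Fin K → Fin M → ℂ) (mt mr : ℝ)
    (hmt : mt ∈ Set.Ioo (0:ℝ) 1) (hmr : mr ∈ Set.Ioo (0:ℝ) 1)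
    (σ2 : Fin K → ℝ) (hσ : ∀ k, 0 < σ2 k) (Pmax : ℝ)
    (U : (Fin K → ℝ) → ℝ)
    (hU : ∀ x y : Fin K → ℝ, (∀ k, x k ≤ y k) → (∃ k, x k < y k) → U x < U y)
    (wcs : Fin M → ℂ) (ws : Fin K → Fin M → ℂ)
    (hfeas : pw wcs + ∑ k, pw (ws k) ≤ Pmax)
    (hopt : ∀ (wc : Fin M → ℂ) (w : Fin K → Fin M → ℂ),
      pw wc + ∑ k, pw (w k) ≤ Pmax →
      U (fun k => sinr mr mt σ2 h 1 wc w k) ≤ U (fun k => sinr mr mt σ2 h 1 wcs ws k)) :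
    (∀ k, star (h k) ⬝ᵥ wcs = 0 ∨ star (h k) ⬝ᵥ ws k = 0) ∧
    ((∀ k, star (h k) ⬝ᵥ ws k ≠ 0) →
      (∀ v : Fin M → ℂ, (∀ k, star (h k) ⬝ᵥ v = 0) → v = 0) →
      wcs = 0) := by
  have hmr0 := hmr.1.le
  have hmt0 := hmt.1.le
  have hperp : ∀ k, star (h k) ⬝ᵥ wcs = 0 ∨ star (h k) ⬝ᵥ ws k = 0 := by
    intro k
    by_contra! ⟨hc, hp⟩
    have hfeas0 : pw (0 : Fin M → ℂ) + ∑ k, pw (ws k) ≤ Pmax := by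
      have hpw0 : pw (0 : Fin M → ℂ) = 0 := by simp [pw]
      have hpw : 0 ≤ pw wcs := Finset.sum_nonneg fun j _ => sq_nonneg ‖wcs j‖
      linarith
    refine (hopt 0 ws hfeas0).not_gt (hU _ _ (fun i => ?_) ⟨k, ?_⟩)
    · exact sinr_le_sinr_zero σ2 h 1 wcs ws i hmr0 hmt0 (hσ i)
    · exact sinr_lt_sinr_zero σ2 h 1 wcs ws k hmr0 hmt0 (hσ k) one_ne_zero hc hp
  exact ⟨hperp, fun hp hnull => hnull wcs fun k => (hperp k).resolve_right (hp k)⟩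

/-- at δ_SIC = 1, with a strictly increasing utility, any maximizer satisfies
h_kᴴ w_c⋆ = 0 or h_kᴴ w_k⋆ = 0 for every k; if moreover h_kᴴ w_k⋆ ≠ 0 for all k and the
channels' common nullspace is trivial, then w_c⋆ = 0. -/
theorem stmt3 {M K : ℕ} (h : Fin K → Fin M → ℂ) (mt mr : ℝ)
    (hmt : mt ∈ Set.Ioo (0:ℝ) 1) (hmr : mr ∈ Set.Ioo (0:ℝ) 1)
    (σ2 : Fin K → ℝ) (hσ : ∀ k, 0 < σ2 k) (Pmax : ℝ) (hP : 0 < Pmax)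
    (U : (Fin K → ℝ) → ℝ)
    (hU : ∀ x y : Fin K → ℝ, (∀ k, x k ≤ y k) → (∃ k, x k < y k) → U x < U y)
    (wcs : Fin M → ℂ) (ws : Fin K → Fin M → ℂ)
    (hfeas : pw wcs + ∑ k, pw (ws k) ≤ Pmax)
    (hopt : ∀ (wc : Fin M → ℂ) (w : Fin K → Fin M → ℂ),
      pw wc + ∑ k, pw (w k) ≤ Pmax →
      U (fun k => sinr mr mt σ2 h 1 wc w k) ≤ U (fun k => sinr mr mt σ2 h 1 wcs ws k)) :
    (∀ k, star (h k) ⬝ᵥ wcs = 0 ∨ star (h k) ⬝ᵥ ws k = 0) ∧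
    ((∀ k, star (h k) ⬝ᵥ ws k ≠ 0) →
      (∀ v : Fin M → ℂ, (∀ k, star (h k) ⬝ᵥ v = 0) → v = 0) →
      wcs = 0) :=
  stmt3_general h mt mr hmt hmr σ2 hσ Pmax U hU wcs ws hfeas hopt
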